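/- arXiv:2507.05164 — 4 statements merged into one kernel-verified Lean document; each statement's English description precedes it below -/
import Mathlib

section
/- Let d, q ≥ 1, k ≥ 0, T > 0 and m ≥ d + q. Then augmented neural ODE architectures with hidden dimension m have the universal embedding property with respect to C^k(ℝ^d,ℝ^q): for every Ψ ∈ C^k(ℝ^d,ℝ^q) there exist a vector field f : [0,T]×ℝ^m → ℝ^m that is continuous in the first variable and k times continuously differentiable in the second variable, full-rank matrices W ∈ ℝ^{m×d} and W̃ ∈ ℝ^{q×m}, and biases b ∈ ℝ^m, b̃ ∈ ℝ^q, such that for every x ∈ ℝ^d there exists a solution h : [0,T] → ℝ^m of the initial value problem h′(t) = f(t,h(t)), h(0) = W·x + b, with W̃·h(T) + b̃ = Ψ(x). -/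
noncomputable section NeuralODEAux

/-- Embedding of `ℝ^d` into the first `d` coordinates of `ℝ^m`. -/
def embMap (d m : ℕ) : (Fin d → ℝ) →ₗ[ℝ] (Fin m → ℝ) where
  toFun x i := if h : (i : ℕ) < d then x ⟨i, h⟩ else 0
  map_add' x y := by ext i; by_cases h : (i : ℕ) < d <;> simp [h]
  map_smul' c x := by ext i; by_cases h : (i : ℕ) < d <;> simp [h]

/-- Placing `ℝ^q` into coordinates `d, …, d+q-1` of `ℝ^m`. -/
def midMap (d q m : ℕ) : (Fin q → ℝ) →ₗ[ℝ] (Fin m → ℝ) where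
  toFun z i := if h : d ≤ (i : ℕ) ∧ (i : ℕ) < d + q then z ⟨(i : ℕ) - d, by omega⟩ else 0
  map_add' x y := by ext i; by_cases h : d ≤ (i : ℕ) ∧ (i : ℕ) < d + q <;> simp [h]
  map_smul' c x := by ext i; by_cases h : d ≤ (i : ℕ) ∧ (i : ℕ) < d + q <;> simp [h]

/-- Projection onto the first `d` coordinates. -/
def projMap (d m : ℕ) (h : d ≤ m) : (Fin m → ℝ) →ₗ[ℝ] (Fin d → ℝ) :=
  LinearMap.funLeft ℝ ℝ (Fin.castLE h)

/-- Projection onto coordinates `d, …, d+q-1`. -/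
def outMap (d q m : ℕ) (h : d + q ≤ m) : (Fin m → ℝ) →ₗ[ℝ] (Fin q → ℝ) :=
  LinearMap.funLeft ℝ ℝ (fun i : Fin q => (⟨d + (i : ℕ), by omega⟩ : Fin m))

end NeuralODEAux



/-- **Universal embedding for augmented neural ODEs.**
If `m ≥ d + q`, then for every `Ψ ∈ C^k(ℝ^d, ℝ^q)` there is an augmented neural ODE
architecture (a vector field `f`, continuous in time and `C^k` in space, full-rank weight
matrices `W`, `Wt` and biases `b`, `bt`) whose input-output map represents `Ψ` exactly. -/
theorem universal_embedding_augmented_neural_ODE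
    (d q m k : ℕ) (hd : 1 ≤ d) (hq : 1 ≤ q) (hm : d + q ≤ m)
    (T : ℝ) (hT : 0 < T)
    (Ψ : (Fin d → ℝ) → (Fin q → ℝ)) (hΨ : ContDiff ℝ k Ψ) :
    ∃ (f : ℝ → (Fin m → ℝ) → (Fin m → ℝ))
      (W : Matrix (Fin m) (Fin d) ℝ) (Wt : Matrix (Fin q) (Fin m) ℝ)
      (b : Fin m → ℝ) (bt : Fin q → ℝ),
      (∀ y : Fin m → ℝ, ContinuousOn (fun t => f t y) (Set.Icc 0 T)) ∧
      (∀ t ∈ Set.Icc (0:ℝ) T, ContDiff ℝ k (f t)) ∧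
      W.rank = d ∧ Wt.rank = q ∧
      ∀ x : Fin d → ℝ, ∃ h : ℝ → (Fin m → ℝ),
        h 0 = W.mulVec x + b ∧
        (∀ t ∈ Set.Icc (0:ℝ) T, HasDerivAt h (f t (h t)) t) ∧
        Wt.mulVec (h T) + bt = Ψ x := by
  have hdm : d ≤ m := by omega
  set E := embMap d m with hE
  set M := midMap d q m with hM
  set P := projMap d m hdm with hP
  set O := outMap d q m hm with hO
  refine ⟨fun _ y => T⁻¹ • M (Ψ (P y)), LinearMap.toMatrix' E, LinearMap.toMatrix' O,
    0, 0, ?_, ?_, ?_, ?_, ?_⟩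
  · intro y; exact continuousOn_const
  · intro t _
    have hMc : ContDiff ℝ k M := (LinearMap.toContinuousLinearMap M).contDiff
    have hPc : ContDiff ℝ k P := (LinearMap.toContinuousLinearMap P).contDiff
    exact (hMc.comp (hΨ.comp hPc)).const_smul _
  · -- rank W = d
    have hinj : Function.Injective (LinearMap.toMatrix' E).mulVecLin := by
      have : (LinearMap.toMatrix' E).mulVecLin = E := by
        apply LinearMap.ext; intro v
        rw [Matrix.mulVecLin_apply, ← Matrix.toLin'_apply, Matrix.toLin'_toMatrix']
      rw [this]
      intro x y hxy
      ext j
      have := congrFun hxy (Fin.castLE hdm j)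
      simpa [hE, embMap, Fin.is_lt] using this
    rw [Matrix.rank, LinearMap.finrank_range_of_inj hinj]
    simp
  · -- rank Wt = q
    have hsurj : Function.Surjective (LinearMap.toMatrix' O).mulVecLin := by
      have : (LinearMap.toMatrix' O).mulVecLin = O := by
        apply LinearMap.ext; intro v
        rw [Matrix.mulVecLin_apply, ← Matrix.toLin'_apply, Matrix.toLin'_toMatrix']
      rw [this, hO, outMap]
      exact LinearMap.funLeft_surjective_of_injective ℝ ℝ _
        (fun a b hab => by simpa [Fin.ext_iff] using hab)
    rw [Matrix.rank, LinearMap.range_eq_top.mpr hsurj]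
    simp
  · intro x
    have hmv : ∀ v, (LinearMap.toMatrix' E).mulVec v = E v := fun v => by
      rw [← Matrix.toLin'_apply, Matrix.toLin'_toMatrix']
    have hmv' : ∀ v, (LinearMap.toMatrix' O).mulVec v = O v := fun v => by
      rw [← Matrix.toLin'_apply, Matrix.toLin'_toMatrix']
    refine ⟨fun t => E x + (t / T) • M (Ψ x), ?_, ?_, ?_⟩
    · simp [hmv]
    · intro t ht
      have hPx : P (E x + (t / T) • M (Ψ x)) = x := by
        ext j
        simp [hP, projMap, hE, embMap, hM, midMap, LinearMap.funLeft,
          j.is_lt, Fin.ext_iff]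
      have : HasDerivAt (fun s : ℝ => E x + (s / T) • M (Ψ x)) (T⁻¹ • M (Ψ x)) t := by
        have h1 : HasDerivAt (fun s : ℝ => (s / T) • M (Ψ x)) ((1 / T) • M (Ψ x)) t :=
          ((hasDerivAt_id t).div_const T).smul_const _
        simpa [one_div] using h1.const_add (E x)
      simpa [hPx] using this
    · rw [hmv']
      ext i
      have hi1 : ¬ ((d + (i : ℕ)) < d) := by omega
      have hi2 : d ≤ d + (i : ℕ) ∧ d + (i : ℕ) < d + q := ⟨by omega, by omega⟩
      simp [hO, outMap, LinearMap.funLeft, hE, embMap, hM, midMap, hi1, hi2,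
        div_self hT.ne', Fin.ext_iff]
end

section
/- Let k ≥ 1 and let Φ : ℝ^d → ℝ be a scalar non-augmented multilayer perceptron, i.e., an MLP whose widths are non-increasing along the network (d = d_0 ≥ m_0 ≥ d_1 ≥ m_1 ≥ … ≥ m_{L−1} ≥ d_L = 1) and all of whose weight matrices W_l, W̃_l have full rank. Then Φ is k times continuously differentiable and ∇Φ(x) ≠ 0 for every x ∈ ℝ^d; in particular, Φ has no critical points, i.e., Φ is of class (C1). -/
open Function ContinuousLinearMap

lemma surj_of_rank_eq {p q : ℕ} (A : Matrix (Fin p) (Fin q) ℝ) (h : A.rank = p) :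
    Function.Surjective A.mulVec := by
  have htop : LinearMap.range A.mulVecLin = ⊤ := by
    apply Submodule.eq_top_of_finrank_eq
    rw [Module.finrank_pi, Fintype.card_fin]
    exact h
  intro v
  obtain ⟨u, hu⟩ := htop ▸ Submodule.mem_top (x := v) (R := ℝ)
  exact ⟨u, hu⟩

/-- The one-layer map is C^k and has a surjective derivative everywhere. -/
lemma layer_step {p q r k : ℕ} (hk : 1 ≤ k)
    (V : Matrix (Fin r) (Fin q) ℝ) (W : Matrix (Fin q) (Fin p) ℝ)
    (b : Fin q → ℝ) (c : Fin r → ℝ) (σ : Fin q → ℝ → ℝ)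
    (hW : Function.Surjective W.mulVec) (hV : Function.Surjective V.mulVec)
    (hσ : ∀ i, ContDiff ℝ k (σ i) ∧ ∀ t, deriv (σ i) t ≠ 0) :
    ContDiff ℝ k (fun y => V.mulVec (fun i => σ i ((W.mulVec y) i + b i)) + c :
        (Fin p → ℝ) → (Fin r → ℝ)) ∧
    ∀ y : Fin p → ℝ, ∃ g' : (Fin p → ℝ) →L[ℝ] (Fin r → ℝ),
      HasFDerivAt (fun y => V.mulVec (fun i => σ i ((W.mulVec y) i + b i)) + c) g' y ∧
      Function.Surjective g' := by
  have hk' : (1 : WithTop ℕ∞) ≤ (k : WithTop ℕ∞) := by exact_mod_cast hk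
  set Wclm : (Fin p → ℝ) →L[ℝ] (Fin q → ℝ) := LinearMap.toContinuousLinearMap W.mulVecLin
  set Vclm : (Fin q → ℝ) →L[ℝ] (Fin r → ℝ) := LinearMap.toContinuousLinearMap V.mulVecLin
  have hWc : ∀ y, Wclm y = W.mulVec y := fun y => rfl
  have hVc : ∀ y, Vclm y = V.mulVec y := fun y => rfl
  constructor
  · have hact : ContDiff ℝ k (fun w : Fin q → ℝ => fun i => σ i (w i + b i)) := by
      apply contDiff_pi.mpr
      intro i
      exact (hσ i).1.comp (((ContinuousLinearMap.proj (R := ℝ) (φ := fun _ : Fin q => ℝ) i).contDiff.add contDiff_const : ContDiff ℝ k fun x : Fin q → ℝ => x i + b i))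
    exact ((Vclm.contDiff.comp (hact.comp Wclm.contDiff)).add contDiff_const)
  · intro y
    set w : Fin q → ℝ := Wclm y with hw
    set D : (Fin q → ℝ) →L[ℝ] (Fin q → ℝ) :=
      ContinuousLinearMap.pi (fun i => deriv (σ i) (w i + b i) • ContinuousLinearMap.proj i) with hD
    have hDsurj : Function.Surjective D := by
      intro v
      refine ⟨fun i => v i / deriv (σ i) (w i + b i), ?_⟩
      funext i
      simp [hD, ContinuousLinearMap.pi_apply]
      field_simp [(hσ i).2 (w i + b i)]
    have hact : HasFDerivAt (fun w : Fin q → ℝ => fun i => σ i (w i + b i)) D w := by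
      apply hasFDerivAt_pi''
      intro i
      rw [ContinuousLinearMap.proj_pi]
      have h1 : HasDerivAt (σ i) (deriv (σ i) (w i + b i)) (w i + b i) :=
        (((hσ i).1.differentiable (lt_of_lt_of_le zero_lt_one hk').ne') (w i + b i)).hasDerivAt
      have h0 := (ContinuousLinearMap.proj (R := ℝ) (φ := fun _ : Fin q => ℝ) i).hasFDerivAt (x := w)
      have h2 := h0.add_const (b i)
      exact h1.comp_hasFDerivAt w h2
    refine ⟨Vclm.comp (D.comp Wclm), ?_, ?_⟩
    · exact ((Vclm.hasFDerivAt).comp y (hact.comp y Wclm.hasFDerivAt)).add_const c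
    · exact hV.comp (hDsurj.comp hW)


/-- The layers of a multilayer perceptron: `h_0 = x`,
`h_{l+1} = V_l · σ_l(W_l · h_l + b_l) + c_l`, where the activation `σ_l` is applied
componentwise (component `i` uses `σ l i`).  `mlpMap … L` is the input-output map of
the MLP with `L` layers. -/
noncomputable def mlpMap (d m : ℕ → ℕ)
    (W : ∀ l : ℕ, Matrix (Fin (m l)) (Fin (d l)) ℝ)
    (V : ∀ l : ℕ, Matrix (Fin (d (l+1))) (Fin (m l)) ℝ)
    (b : ∀ l : ℕ, Fin (m l) → ℝ)
    (c : ∀ l : ℕ, Fin (d (l+1)) → ℝ)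
    (σ : ∀ l : ℕ, Fin (m l) → ℝ → ℝ) :
    (L : ℕ) → (Fin (d 0) → ℝ) → (Fin (d L) → ℝ)
  | 0, x => x
  | (L+1), x =>
      (V L).mulVec
        (fun i => σ L i (((W L).mulVec (mlpMap d m W V b c σ L x)) i + b L i)) + c L

/-- **Scalar non-augmented MLPs have no critical points (class (C1)).**
If the widths are non-increasing (`d l ≥ m l ≥ d (l+1)`), all weight matrices have full
rank, and the activations are strictly monotone `C^k` functions with nowhere-vanishing
derivative, then the scalar input-output map is `C^k` and its differential never
vanishes. -/
theorem scalar_nonaugmented_MLP_no_critical_points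
    (k L : ℕ) (hk : 1 ≤ k) (hL : 1 ≤ L)
    (d m : ℕ → ℕ) (hdL : d L = 1)
    (W : ∀ l : ℕ, Matrix (Fin (m l)) (Fin (d l)) ℝ)
    (V : ∀ l : ℕ, Matrix (Fin (d (l+1))) (Fin (m l)) ℝ)
    (b : ∀ l : ℕ, Fin (m l) → ℝ)
    (c : ∀ l : ℕ, Fin (d (l+1)) → ℝ)
    (σ : ∀ l : ℕ, Fin (m l) → ℝ → ℝ)
    (hmono1 : ∀ l < L, m l ≤ d l)
    (hmono2 : ∀ l < L, d (l+1) ≤ m l)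
    (hWrank : ∀ l < L, (W l).rank = m l)
    (hVrank : ∀ l < L, (V l).rank = d (l+1))
    (hσ : ∀ l < L, ∀ i, ContDiff ℝ k (σ l i) ∧
      (StrictMono (σ l i) ∨ StrictAnti (σ l i)) ∧ ∀ t : ℝ, deriv (σ l i) t ≠ 0) :
    ContDiff ℝ k (fun x => mlpMap d m W V b c σ L x ⟨0, by omega⟩) ∧
    ∀ x : Fin (d 0) → ℝ,
      fderiv ℝ (fun x => mlpMap d m W V b c σ L x ⟨0, by omega⟩) x ≠ 0 := by
  have hk' : (1 : WithTop ℕ∞) ≤ (k : WithTop ℕ∞) := by exact_mod_cast hk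
  set F := mlpMap d m W V b c σ with hF
  have key : ∀ n, n ≤ L → ContDiff ℝ k (F n) ∧
      ∀ x, Function.Surjective (fderiv ℝ (F n) x) := by
    intro n
    induction n with
    | zero =>
      intro _
      have h0 : F 0 = fun x => x := rfl
      rw [h0]
      refine ⟨contDiff_id, fun x => ?_⟩
      rw [fderiv_id']
      exact Function.surjective_id
    | succ n ih =>
      intro hn
      have hnL : n < L := hn
      obtain ⟨ihC, ihS⟩ := ih hnL.le
      obtain ⟨hgC, hgD⟩ := layer_step hk (V n) (W n) (b n) (c n) (σ n)
        (surj_of_rank_eq _ (hWrank n hnL)) (surj_of_rank_eq _ (hVrank n hnL))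
        (fun i => ⟨(hσ n hnL i).1, (hσ n hnL i).2.2⟩)
      have hcomp : F (n+1) = (fun y => (V n).mulVec
          (fun i => σ n i (((W n).mulVec y) i + b n i)) + c n) ∘ (F n) := rfl
      constructor
      · rw [hcomp]; exact hgC.comp ihC
      · intro x
        obtain ⟨g', hg', hgsurj⟩ := hgD (F n x)
        have hFd : HasFDerivAt (F n) (fderiv ℝ (F n) x) x :=
          ((ihC.differentiable (lt_of_lt_of_le zero_lt_one hk').ne') x).hasFDerivAt
        have : HasFDerivAt (F (n+1)) (g'.comp (fderiv ℝ (F n) x)) x := by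
          rw [hcomp]; exact hg'.comp x hFd
        rw [this.fderiv]
        exact hgsurj.comp (ihS x)
  obtain ⟨hC, hS⟩ := key L le_rfl
  have i0 : Fin (d L) := ⟨0, by omega⟩
  set P : (Fin (d L) → ℝ) →L[ℝ] ℝ := ContinuousLinearMap.proj ⟨0, by omega⟩ with hP
  have hPsurj : Function.Surjective P := fun v => ⟨fun _ => v, rfl⟩
  have hfun : (fun x => F L x ⟨0, by omega⟩) = fun x => P (F L x) := rfl
  constructor
  · rw [hfun]; exact P.contDiff.comp hC
  · intro x
    have hFd : HasFDerivAt (F L) (fderiv ℝ (F L) x) x :=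
      ((hC.differentiable (lt_of_lt_of_le zero_lt_one hk').ne') x).hasFDerivAt
    have hD : HasFDerivAt (fun x => F L x ⟨0, by omega⟩)
        (P.comp (fderiv ℝ (F L) x)) x := P.hasFDerivAt.comp x hFd
    rw [hD.fderiv]
    intro h0
    obtain ⟨u, hu⟩ := (hPsurj.comp (hS x)) 1
    rw [show P ∘ ⇑(fderiv ℝ (F L) x) = ⇑(P.comp (fderiv ℝ (F L) x)) from rfl, h0] at hu
    simp at hu
end

section
/- For every d ≥ 1 and k ≥ 1, the class of scalar non-augmented MLPs does not have the universal approximation property with respect to C⁰(ℝ^d,ℝ): there exist a continuous function Ψ : ℝ^d → ℝ and ε > 0 such that every scalar non-augmented MLP Φ : ℝ^d → ℝ (non-increasing widths, all weight matrices of full rank, componentwise strictly monotone C^k activations with nowhere-vanishing derivative) satisfies sup_{x ∈ ℝ^d} |Φ(x) − Ψ(x)| ≥ ε. -/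
open Function Set


/-- A continuous strictly monotone real function is an open map. -/
lemma strictMono_isOpenMap {f : ℝ → ℝ} (hc : Continuous f) (hm : StrictMono f) :
    IsOpenMap f := by
  intro U hU
  rw [isOpen_iff_mem_nhds]
  rintro _ ⟨x, hxU, rfl⟩
  obtain ⟨ε, hε, hball⟩ := Metric.isOpen_iff.1 hU x hxU
  have hsub : Set.Ioo (x - ε/2) (x + ε/2) ⊆ U := by
    intro t ht
    apply hball
    rw [Real.ball_eq_Ioo]
    exact ⟨by linarith [ht.1], by linarith [ht.2]⟩
  have hIV : Set.Ioo (f (x - ε/2)) (f (x + ε/2)) ⊆ f '' Set.Ioo (x - ε/2) (x + ε/2) :=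
    intermediate_value_Ioo (by linarith) hc.continuousOn
  have hmem : f x ∈ Set.Ioo (f (x - ε/2)) (f (x + ε/2)) :=
    ⟨hm (by linarith), hm (by linarith)⟩
  exact Filter.mem_of_superset (isOpen_Ioo.mem_nhds hmem)
    (hIV.trans (Set.image_mono hsub))

lemma strictMonoOrAnti_isOpenMap {f : ℝ → ℝ} (hc : Continuous f)
    (hm : StrictMono f ∨ StrictAnti f) : IsOpenMap f := by
  rcases hm with hm | hm
  · exact strictMono_isOpenMap hc hm
  · have h1 : IsOpenMap fun t => -(f t) := strictMono_isOpenMap hc.neg hm.neg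
    have := (Homeomorph.neg ℝ).isOpenMap.comp h1
    have heq : (⇑(Homeomorph.neg ℝ) ∘ fun t => -(f t)) = f := by funext t; simp
    rwa [heq] at this

lemma mulVec_surjective_of_rank {n p : ℕ} (M : Matrix (Fin n) (Fin p) ℝ)
    (h : M.rank = n) : Function.Surjective M.mulVec := by
  have htop : LinearMap.range M.mulVecLin = ⊤ := by
    apply Submodule.eq_top_of_finrank_eq
    rw [Module.finrank_fintype_fun_eq_card, Fintype.card_fin]
    exact h
  intro y
  have : y ∈ LinearMap.range M.mulVecLin := htop ▸ Submodule.mem_top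
  obtain ⟨x, hx⟩ := this
  exact ⟨x, hx⟩

lemma mulVec_isOpenMap_of_rank {n p : ℕ} (M : Matrix (Fin n) (Fin p) ℝ)
    (h : M.rank = n) : IsOpenMap M.mulVec ∧ Continuous M.mulVec := by
  let f := LinearMap.toContinuousLinearMap M.mulVecLin
  have hf : ⇑f = M.mulVec := rfl
  constructor
  · have := ContinuousLinearMap.isOpenMap f (by rw [hf]; exact mulVec_surjective_of_rank M h)
    rwa [hf] at this
  · have := f.continuous; rwa [hf] at this

lemma mlp_isOpenMap_continuous (dw m : ℕ → ℕ)
    (W : ∀ l : ℕ, Matrix (Fin (m l)) (Fin (dw l)) ℝ)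
    (V : ∀ l : ℕ, Matrix (Fin (dw (l+1))) (Fin (m l)) ℝ)
    (b : ∀ l : ℕ, Fin (m l) → ℝ) (c : ∀ l : ℕ, Fin (dw (l+1)) → ℝ)
    (σ : ∀ l : ℕ, Fin (m l) → ℝ → ℝ) (L : ℕ)
    (hW : ∀ l < L, (W l).rank = m l) (hV : ∀ l < L, (V l).rank = dw (l+1))
    (hσ : ∀ l < L, ∀ i, Continuous (σ l i) ∧ (StrictMono (σ l i) ∨ StrictAnti (σ l i))) :
    IsOpenMap (mlpMap dw m W V b c σ L) ∧ Continuous (mlpMap dw m W V b c σ L) := by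
  induction L with
  | zero => exact ⟨IsOpenMap.id, continuous_id⟩
  | succ L ih =>
    obtain ⟨ihO, ihC⟩ := ih (fun l hl => hW l (by omega)) (fun l hl => hV l (by omega))
      (fun l hl => hσ l (by omega))
    obtain ⟨hWO, hWC⟩ := mulVec_isOpenMap_of_rank (W L) (hW L (by omega))
    obtain ⟨hVO, hVC⟩ := mulVec_isOpenMap_of_rank (V L) (hV L (by omega))
    set g : (Fin (m L) → ℝ) → (Fin (m L) → ℝ) :=
      Pi.map (fun i t => σ L i (t + b L i)) with hg
    have hgO : IsOpenMap g := by
      apply IsOpenMap.piMap ?_ (by simp [Filter.cofinite_eq_bot])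
      intro i
      have hci : Continuous (σ L i) := (hσ L (by omega) i).1
      have : Continuous fun t : ℝ => σ L i (t + b L i) :=
        hci.comp (continuous_id.add continuous_const)
      apply strictMonoOrAnti_isOpenMap this
      rcases (hσ L (by omega) i).2 with hmo | hmo
      · exact Or.inl fun s t hst => hmo (by simpa using hst)
      · exact Or.inr fun s t hst => hmo (by simpa using hst)
    have hgC : Continuous g := by
      apply continuous_pi
      intro i
      exact ((hσ L (by omega) i).1.comp ((continuous_apply i).add continuous_const))
    have htO : IsOpenMap (fun v : Fin (dw (L+1)) → ℝ => v + c L) :=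
      (Homeomorph.addRight (c L)).isOpenMap
    have heq : mlpMap dw m W V b c σ (L+1)
        = (fun v => v + c L) ∘ (V L).mulVec ∘ g ∘ (W L).mulVec ∘ mlpMap dw m W V b c σ L := by
      funext x
      simp only [mlpMap, hg, Function.comp]
      rfl
    constructor
    · rw [heq]
      exact htO.comp (hVO.comp (hgO.comp (hWO.comp ihO)))
    · rw [heq]
      exact (continuous_id.add continuous_const).comp (hVC.comp (hgC.comp (hWC.comp ihC)))

/-- **Scalar non-augmented MLPs are not universal approximators of `C⁰(ℝ^d, ℝ)`.**
There exist a continuous function `Ψ : ℝ^d → ℝ` and `ε > 0` such that every scalar MLP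
with non-increasing widths, full-rank weight matrices, and componentwise strictly
monotone `C^k` activations with nowhere-vanishing derivative stays uniformly at distance
at least `ε` from `Ψ` somewhere. -/
theorem scalar_nonaugmented_MLP_not_universal
    (d k : ℕ) (hd : 1 ≤ d) (hk : 1 ≤ k) :
    ∃ (Ψ : (Fin d → ℝ) → ℝ) (ε : ℝ), Continuous Ψ ∧ 0 < ε ∧
      ∀ (L : ℕ) (dw m : ℕ → ℕ) (hd0 : dw 0 = d) (hdwL : dw L = 1)
        (W : ∀ l : ℕ, Matrix (Fin (m l)) (Fin (dw l)) ℝ)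
        (V : ∀ l : ℕ, Matrix (Fin (dw (l+1))) (Fin (m l)) ℝ)
        (b : ∀ l : ℕ, Fin (m l) → ℝ) (c : ∀ l : ℕ, Fin (dw (l+1)) → ℝ)
        (σ : ∀ l : ℕ, Fin (m l) → ℝ → ℝ),
        (∀ l < L, m l ≤ dw l) → (∀ l < L, dw (l+1) ≤ m l) →
        (∀ l < L, (W l).rank = m l) → (∀ l < L, (V l).rank = dw (l+1)) →
        (∀ l < L, ∀ i, ContDiff ℝ k (σ l i) ∧
          (StrictMono (σ l i) ∨ StrictAnti (σ l i)) ∧ ∀ t : ℝ, deriv (σ l i) t ≠ 0) →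
        ∃ x : Fin d → ℝ,
          ε ≤ |mlpMap dw m W V b c σ L (fun i => x (Fin.cast hd0 i)) ⟨0, by omega⟩ - Ψ x| := by
  refine ⟨fun x => max 0 (1 - ‖x‖), 1/4, ?_, by norm_num, ?_⟩
  · exact continuous_const.max (continuous_const.sub continuous_norm)
  intro L dw m hd0 hdwL W V b c σ _ _ hW hV hσ
  by_contra hcon
  push_neg at hcon
  subst hd0
  -- F is the MLP as a real-valued function
  set Φ := mlpMap dw m W V b c σ L with hΦ
  have j0 : Fin (dw L) := ⟨0, by omega⟩
  set F : (Fin (dw 0) → ℝ) → ℝ := fun x => Φ x ⟨0, by omega⟩ with hF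
  obtain ⟨hΦO, hΦC⟩ := mlp_isOpenMap_continuous dw m W V b c σ L hW hV
    (fun l hl i => ⟨((hσ l hl i).1).continuous, (hσ l hl i).2.1⟩)
  have hFO : IsOpenMap F := (isOpenMap_eval _).comp hΦO
  have hFC : Continuous F := (continuous_apply _).comp hΦC
  have hx : ∀ x : Fin (dw 0) → ℝ, |F x - max 0 (1 - ‖x‖)| < 1/4 := by
    intro x
    have := hcon x
    simpa [hF, hΦ] using this
  -- F 0 > 3/4
  have h0 : (3:ℝ)/4 < F 0 := by
    have := hx 0
    simp only [norm_zero, sub_zero, max_eq_right (by norm_num : (0:ℝ) ≤ 1)] at this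
    cases abs_lt.1 this with
    | intro h1 h2 => linarith
  -- outside the unit ball F < 1/4
  have hout : ∀ x : Fin (dw 0) → ℝ, 1 ≤ ‖x‖ → F x < 1/4 := by
    intro x hxn
    have := hx x
    rw [max_eq_left (by linarith)] at this
    cases abs_lt.1 (by simpa using this) with
    | intro h1 h2 => linarith
  -- max of F on the closed unit ball
  obtain ⟨x₀, hx₀K, hx₀max⟩ :=
    (isCompact_closedBall (0 : Fin (dw 0) → ℝ) 1).exists_isMaxOn
      ⟨0, Metric.mem_closedBall_self (by norm_num)⟩ hFC.continuousOn
  have hx₀val : (3:ℝ)/4 < F x₀ := lt_of_lt_of_le h0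
    (hx₀max (Metric.mem_closedBall_self (by norm_num)))
  have hx₀ball : x₀ ∈ Metric.ball (0 : Fin (dw 0) → ℝ) 1 := by
    rcases lt_or_ge ‖x₀‖ 1 with h | h
    · simpa [Metric.mem_ball, dist_eq_norm] using h
    · exact absurd (hout x₀ h) (by linarith)
  -- F is a global max at x₀, contradicting openness
  have hglobal : ∀ y, F y ≤ F x₀ := by
    intro y
    rcases le_or_gt ‖y‖ 1 with h | h
    · exact hx₀max (by simpa [Metric.mem_closedBall, dist_eq_norm] using h)
    · linarith [hout y h.le]
  have hU : IsOpen (F '' Metric.ball 0 1) := hFO _ Metric.isOpen_ball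
  obtain ⟨δ, hδ, hball⟩ := Metric.isOpen_iff.1 hU (F x₀) ⟨x₀, hx₀ball, rfl⟩
  have : F x₀ + δ/2 ∈ F '' Metric.ball 0 1 := by
    apply hball
    simp [Real.dist_eq, abs_of_nonneg, hδ.le]
    linarith
  obtain ⟨z, _, hz⟩ := this
  have := hglobal z
  rw [hz] at this
  linarith
end

section
/- Let L : ℝ^D → ℝ be continuously differentiable, η > 0, let φ(θ) = θ − η∇L(θ) be the gradient descent map, and suppose φ is non-singular, i.e., the preimage under φ of every Lebesgue-null set is a Lebesgue-null set. Let θ* be a local minimum of L. Then θ* is locally Milnor stable if and only if θ* is Milnor stable. (The implication that local Milnor stability implies Milnor stability holds without the non-singularity assumption.) -/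
open MeasureTheory Filter

/-- A fixed point `θ` of `φ` is Milnor stable if the set of initializations from which
the iterates of `φ` converge to `θ` has positive Lebesgue measure. -/
def MilnorStable {D : ℕ} (φ : EuclideanSpace ℝ (Fin D) → EuclideanSpace ℝ (Fin D))
    (θ : EuclideanSpace ℝ (Fin D)) : Prop :=
  0 < volume {θ₀ : EuclideanSpace ℝ (Fin D) |
    Tendsto (fun n => φ^[n] θ₀) atTop (nhds θ)}

/-- A fixed point `θ` of `φ` is locally Milnor stable if, for every open neighborhood `U`
of `θ`, the set of initializations in `U` whose iterates stay in `U` forever and converge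
to `θ` has positive Lebesgue measure. -/
def LocallyMilnorStable {D : ℕ} (φ : EuclideanSpace ℝ (Fin D) → EuclideanSpace ℝ (Fin D))
    (θ : EuclideanSpace ℝ (Fin D)) : Prop :=
  ∀ U : Set (EuclideanSpace ℝ (Fin D)), IsOpen U → θ ∈ U →
    0 < volume {θ₀ : EuclideanSpace ℝ (Fin D) |
      θ₀ ∈ U ∧ (∀ n : ℕ, φ^[n] θ₀ ∈ U) ∧ Tendsto (fun n => φ^[n] θ₀) atTop (nhds θ)}

/-- **For non-singular gradient descent maps, Milnor stability and local Milnor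
stability coincide.** -/
theorem locallyMilnorStable_iff_milnorStable
    (D : ℕ) (L : EuclideanSpace ℝ (Fin D) → ℝ) (hL : ContDiff ℝ 1 L)
    (η : ℝ) (hη : 0 < η)
    (φ : EuclideanSpace ℝ (Fin D) → EuclideanSpace ℝ (Fin D))
    (hφ : ∀ θ, φ θ = θ - η • gradient L θ)
    (hns : ∀ A : Set (EuclideanSpace ℝ (Fin D)), volume A = 0 → volume (φ ⁻¹' A) = 0)
    (θs : EuclideanSpace ℝ (Fin D)) (hmin : IsLocalMin L θs) :
    LocallyMilnorStable φ θs ↔ MilnorStable φ θs := by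
  constructor
  · intro h
    have h0 := h Set.univ isOpen_univ (Set.mem_univ _)
    exact lt_of_lt_of_le h0 (measure_mono fun x hx => hx.2.2)
  · intro h U hU hθ
    set S := {θ₀ : EuclideanSpace ℝ (Fin D) |
      θ₀ ∈ U ∧ (∀ n : ℕ, φ^[n] θ₀ ∈ U) ∧ Tendsto (fun n => φ^[n] θ₀) atTop (nhds θs)}
      with hSdef
    by_contra hc
    have hS : volume S = 0 := by
      simpa using not_lt.mp hc
    -- iterates of φ are non-singular
    have hiter : ∀ (N : ℕ) (A : Set (EuclideanSpace ℝ (Fin D))),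
        volume A = 0 → volume ((φ^[N]) ⁻¹' A) = 0 := by
      intro N
      induction N with
      | zero => intro A hA; simpa using hA
      | succ n ih =>
          intro A hA
          have : (φ^[n + 1]) ⁻¹' A = φ ⁻¹' ((φ^[n]) ⁻¹' A) := by
            ext x
            simp [Function.iterate_succ_apply, Set.mem_preimage]
          rw [this]
          exact hns _ (ih A hA)
    -- the convergence set is covered by preimages of S
    have hsub : {θ₀ : EuclideanSpace ℝ (Fin D) |
        Tendsto (fun n => φ^[n] θ₀) atTop (nhds θs)} ⊆ ⋃ N : ℕ, (φ^[N]) ⁻¹' S := by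
      intro x hx
      have hev : ∀ᶠ n in atTop, φ^[n] x ∈ U := hx.eventually (hU.mem_nhds hθ)
      obtain ⟨N, hN⟩ := eventually_atTop.mp hev
      refine Set.mem_iUnion.mpr ⟨N, ?_⟩
      have hkey : ∀ n : ℕ, φ^[n] (φ^[N] x) = φ^[n + N] x := by
        intro n; rw [← Function.iterate_add_apply]
      refine ⟨hN N le_rfl, ?_, ?_⟩
      · intro n
        rw [hkey]
        exact hN (n + N) (Nat.le_add_left _ _)
      · have : Tendsto (fun n => φ^[n + N] x) atTop (nhds θs) :=
          hx.comp (tendsto_add_atTop_nat N)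
        simpa [hkey] using this
    have hnull : volume (⋃ N : ℕ, (φ^[N]) ⁻¹' S) = 0 :=
      measure_iUnion_null fun N => hiter N S hS
    have : volume {θ₀ : EuclideanSpace ℝ (Fin D) |
        Tendsto (fun n => φ^[n] θ₀) atTop (nhds θs)} = 0 :=
      measure_mono_null hsub hnull
    exact absurd this (ne_of_gt h)
end
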